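/- Let f = h + conj(g) ∈ Ľ_H^α and J_f(z) = |h'(z)|² - |g'(z)|². Then for z ∈ Δ with |z| < α, J_f(z) ≤ (1 - α²)(1 + |z|)³ / ((1 - α|z|)²(1 - |z|)⁵), and for z ∈ Δ with |z| ≥ α, J_f(z) ≤ (1 + |z|)² / (1 - |z|)⁶. -/

import Mathlib

/-!
Write `ω = g'/h'`, so that `J_f = |h'|² (1 - |ω|²)`. Since `|g'| < |h'|`, `ω` is a holomorphic
self-map of the disc with `|ω(0)| = α`, and the Schwarz–Pick lemma gives
`|ω(z)| ≥ (α - |z|)/(1 - α|z|)` for `|z| < α`, i.e. `1 - |ω(z)|² ≤ (1 - α²)(1 - |z|²)/(1 - α|z|)²`.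
It remains to bound `|h'|` for a normalised starlike univalent `h`. Starlikeness means that
`ζ ↦ h⁻¹(t h(ζ))` maps the disc into itself for `t ∈ [0, 1]`; differentiating the Schwarz bound
`|h⁻¹(t h(z))| ≤ |z|` at `t = 1` gives `Re (z h'/h) ≥ 0`. Schwarz's lemma for the Cayley transform of
`p = z h'/h` gives `|p(z) - 1| ≤ 2|z|/(1 - |z|)`, hence `|p(z)| ≤ (1 + |z|)/(1 - |z|)`, and integrating
the logarithmic derivative `(p - 1)/z` of `h(z)/z` along the radius gives `|h(z)/z| ≤ (1 - |z|)⁻²`.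
Together, `|h'(z)| ≤ (1 + |z|)/(1 - |z|)³`.
-/

open Metric Set Complex ComplexConjugate Filter Topology

theorem HasDerivAt.nonneg_of_isMaxOn_Icc {f : ℝ → ℝ} {d a b : ℝ} (hf : HasDerivAt f d b)
    (hab : a < b) (hmax : IsMaxOn f (Icc a b) b) : 0 ≤ d := by
  have hcone : a - b ∈ posTangentConeAt (Icc a b) b :=
    sub_mem_posTangentConeAt_of_segment_subset
      ((convex_Icc a b).segment_subset (right_mem_Icc.2 hab.le) (left_mem_Icc.2 hab.le))
  have := hmax.localize.hasFDerivWithinAt_nonpos hf.hasFDerivAt.hasFDerivWithinAt hcone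
  rw [ContinuousLinearMap.toSpanSingleton_apply, smul_eq_mul] at this
  nlinarith

theorem hasDerivAt_one_sub_mul_pow (r t : ℝ) (n : ℕ) (ht : t * r ≠ 1) :
    HasDerivAt (fun s : ℝ => (1 - s * r) ^ n) (-(n * r / (1 - t * r)) * (1 - t * r) ^ n) t := by
  refine ((((hasDerivAt_id t).mul_const r).const_sub 1).fun_pow n).congr_deriv ?_
  rcases n with _ | m
  · simp
  · have : 1 - t * r ≠ 0 := sub_ne_zero.2 (Ne.symm ht)
    simp only [id, one_mul, Nat.add_sub_cancel, pow_succ]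
    field_simp

theorem pow_mul_norm_le_of_norm_deriv_le {E : Type*} [NormedAddCommGroup E]
    [InnerProductSpace ℝ E] {c c' : ℝ → E} {r : ℝ} {n : ℕ} (hr : r < 1)
    (hc : ∀ t ∈ Icc (0 : ℝ) 1, HasDerivAt c (c' t) t)
    (hc' : ∀ t ∈ Ioo (0 : ℝ) 1, ‖c' t‖ ≤ n * r / (1 - t * r) * ‖c t‖) :
    (1 - r) ^ n * ‖c 1‖ ≤ ‖c 0‖ := by
  have hpos : ∀ t ∈ Icc (0 : ℝ) 1, 0 < 1 - t * r := fun t ht => by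
    rcases le_or_gt r 0 with h | h <;> nlinarith [ht.1, ht.2]
  -- the bound on `c'` makes `‖(1 - t r)ⁿ c t‖` nonincreasing
  set d : ℝ → E := fun t => (1 - t * r) ^ n • c t
  have hd : ∀ t ∈ Icc (0 : ℝ) 1,
      HasDerivAt (‖d ·‖ ^ 2) (2 * inner ℝ (d t) ((1 - t * r) ^ n •
        (c' t - (n * r / (1 - t * r)) • c t))) t := fun t ht => by
    have := ((hasDerivAt_one_sub_mul_pow r t n (by linarith [hpos t ht])).fun_smul
      (hc t ht)).norm_sq
    convert this using 3
    module
  have hanti : AntitoneOn (‖d ·‖ ^ 2) (Icc 0 1) := by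
    refine antitoneOn_of_deriv_nonpos (convex_Icc 0 1)
      (fun t ht => (hd t ht).continuousAt.continuousWithinAt)
      (fun t ht => (hd t (interior_subset ht)).differentiableAt.differentiableWithinAt)
      (fun t ht => ?_)
    rw [interior_Icc] at ht
    rw [(hd t (Ioo_subset_Icc_self ht)).deriv, inner_smul_left, inner_smul_right,
      inner_sub_right, inner_smul_right, real_inner_self_eq_norm_sq, conj_trivial]
    have hcs := (real_inner_le_norm (c t) (c' t)).trans
      (mul_le_mul_of_nonneg_left (hc' t ht) (norm_nonneg _))
    nlinarith [mul_le_mul_of_nonneg_left hcs (sq_nonneg ((1 - t * r) ^ n))]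
  have h10 := hanti (left_mem_Icc.2 zero_le_one) (right_mem_Icc.2 zero_le_one) zero_le_one
  simp only [d, norm_smul, zero_mul, sub_zero, one_pow, one_smul, one_mul, Real.norm_eq_abs,
    abs_pow] at h10
  rw [abs_of_pos (by linarith)] at h10
  exact (pow_le_pow_iff_left₀ (by positivity) (norm_nonneg _) two_ne_zero).1 h10

theorem mul_deriv_dslope_zero {h : ℂ → ℂ} {ζ : ℂ} (hh : DifferentiableAt ℂ h ζ) (hζ : ζ ≠ 0) :
    ζ * deriv (dslope h 0) ζ = deriv h ζ - dslope h 0 ζ := by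
  have hslope : dslope h 0 =ᶠ[𝓝 ζ] fun w => (h w - h 0) / w := by
    filter_upwards [isOpen_ne.mem_nhds hζ] with w hw
    rw [dslope_of_ne _ hw, slope_def_field, sub_zero]
  have hder := (hh.hasDerivAt.sub_const (h 0)).div (hasDerivAt_id ζ) hζ
  rw [(hder.congr_of_eventuallyEq hslope).deriv, dslope_of_ne _ hζ, slope_def_field, sub_zero]
  simp only [id]
  field_simp

theorem hasStrictDerivAt_invFunOn {h : ℂ → ℂ} {U : Set ℂ} (hU : IsOpen U)
    (hd : DifferentiableOn ℂ h U) (hinj : InjOn h U) {x : ℂ} (hx : x ∈ U)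
    (hne : deriv h x ≠ 0) :
    HasStrictDerivAt (Function.invFunOn h U) (deriv h x)⁻¹ (h x) :=
  (hd.analyticAt (hU.mem_nhds hx)).hasStrictDerivAt.to_local_left_inverse hne
    ((hU.eventually_mem hx).mono fun _ hy => hinj.leftInvOn_invFunOn hy)

section Caratheodory

variable {p : ℂ → ℂ} {z : ℂ}

theorem norm_sub_one_le_mul_norm_add_one_of_re_nonneg
    (hp : DifferentiableOn ℂ p (ball 0 1)) (hre : ∀ w ∈ ball (0 : ℂ) 1, 0 ≤ (p w).re)
    (hp0 : p 0 = 1) (hz : z ∈ ball (0 : ℂ) 1) :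
    ‖p z - 1‖ ≤ ‖z‖ * ‖p z + 1‖ := by
  have hle : ∀ w ∈ ball (0 : ℂ) 1, ‖p w - 1‖ ≤ ‖p w + 1‖ := fun w hw => by
    rw [← sq_le_sq₀ (norm_nonneg _) (norm_nonneg _), Complex.sq_norm, Complex.sq_norm,
      normSq_apply, normSq_apply]
    simp only [sub_re, sub_im, add_re, add_im, one_re, one_im]
    nlinarith [hre w hw]
  have hne : ∀ w ∈ ball (0 : ℂ) 1, p w + 1 ≠ 0 := fun w hw h0 => by
    have := congrArg re h0
    simp only [add_re, one_re, zero_re] at this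
    linarith [hre w hw]
  -- Schwarz's lemma for the Cayley transform of `p`
  have hcayley := norm_le_norm_of_mapsTo_ball (f := fun w => (p w - 1) / (p w + 1))
    ((hp.sub_const 1).div (hp.add_const 1) hne)
    (fun w hw => by
      simpa [norm_div] using div_le_one_of_le₀ (hle w hw) (norm_nonneg _))
    (by simp [hp0]) (mem_ball_zero_iff.1 hz)
  rwa [norm_div, div_le_iff₀ (norm_pos_iff.2 (hne z hz))] at hcayley

theorem norm_sub_one_le_of_re_nonneg
    (hp : DifferentiableOn ℂ p (ball 0 1)) (hre : ∀ w ∈ ball (0 : ℂ) 1, 0 ≤ (p w).re)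
    (hp0 : p 0 = 1) (hz : z ∈ ball (0 : ℂ) 1) :
    ‖p z - 1‖ ≤ 2 * ‖z‖ / (1 - ‖z‖) := by
  have hz1 : ‖z‖ < 1 := mem_ball_zero_iff.1 hz
  have hcayley := norm_sub_one_le_mul_norm_add_one_of_re_nonneg hp hre hp0 hz
  have htri : ‖p z + 1‖ ≤ ‖p z - 1‖ + 2 := by
    calc ‖p z + 1‖ = ‖(p z - 1) + 2‖ := by ring_nf
      _ ≤ ‖p z - 1‖ + 2 := by simpa using norm_add_le (p z - 1) 2
  rw [le_div_iff₀ (by linarith)]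
  nlinarith [norm_nonneg z]

theorem norm_le_of_re_nonneg
    (hp : DifferentiableOn ℂ p (ball 0 1)) (hre : ∀ w ∈ ball (0 : ℂ) 1, 0 ≤ (p w).re)
    (hp0 : p 0 = 1) (hz : z ∈ ball (0 : ℂ) 1) :
    ‖p z‖ ≤ (1 + ‖z‖) / (1 - ‖z‖) := by
  have hz1 : ‖z‖ < 1 := mem_ball_zero_iff.1 hz
  calc ‖p z‖ ≤ ‖p z - 1‖ + 1 := by simpa using norm_add_le (p z - 1) 1
    _ ≤ 2 * ‖z‖ / (1 - ‖z‖) + 1 := by gcongr; exact norm_sub_one_le_of_re_nonneg hp hre hp0 hz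
    _ = (1 + ‖z‖) / (1 - ‖z‖) := by field_simp [(by linarith : 1 - ‖z‖ ≠ 0)]; ring

end Caratheodory

theorem sq_norm_one_sub_conj_mul_sub_sq_norm_sub (a w : ℂ) :
    ‖1 - conj a * w‖ ^ 2 - ‖a - w‖ ^ 2 = (1 - ‖a‖ ^ 2) * (1 - ‖w‖ ^ 2) := by
  simp only [Complex.sq_norm, normSq_apply, sub_re, sub_im, mul_re, mul_im, one_re, one_im,
    conj_re, conj_im]
  ring

theorem norm_sub_le_mul_norm_one_sub_conj_mul {ω : ℂ → ℂ} (hω : DifferentiableOn ℂ ω (ball 0 1))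
    (hmaps : MapsTo ω (ball 0 1) (ball 0 1)) {z : ℂ} (hz : z ∈ ball (0 : ℂ) 1) :
    ‖ω 0 - ω z‖ ≤ ‖z‖ * ‖1 - conj (ω 0) * ω z‖ := by
  set a := ω 0
  have ha : ‖a‖ < 1 := mem_ball_zero_iff.1 (hmaps (mem_ball_self one_pos))
  have hω1 : ∀ w ∈ ball (0 : ℂ) 1, ‖ω w‖ < 1 := fun w hw => mem_ball_zero_iff.1 (hmaps hw)
  have hne : ∀ w ∈ ball (0 : ℂ) 1, 1 - conj a * ω w ≠ 0 := fun w hw h0 => by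
    have : ‖conj a * ω w‖ = 1 := by rw [← sub_eq_zero.1 h0, norm_one]
    rw [norm_mul, norm_conj] at this
    nlinarith [hω1 w hw, norm_nonneg a, norm_nonneg (ω w)]
  have hmoeb := norm_le_norm_of_mapsTo_ball (f := fun w => (a - ω w) / (1 - conj a * ω w))
    ((hω.const_sub a).div ((hω.const_mul _).const_sub 1) hne)
    (fun w hw => by
      have hid := sq_norm_one_sub_conj_mul_sub_sq_norm_sub a (ω w)
      have hlt : ‖a - ω w‖ ≤ ‖1 - conj a * ω w‖ := by
        rw [← sq_le_sq₀ (norm_nonneg _) (norm_nonneg _)]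
        nlinarith [mul_nonneg (by nlinarith [norm_nonneg a] : 0 ≤ 1 - ‖a‖ ^ 2)
          (by nlinarith [hω1 w hw, norm_nonneg (ω w)] : 0 ≤ 1 - ‖ω w‖ ^ 2)]
      simpa [norm_div] using div_le_one_of_le₀ hlt (norm_nonneg _))
    (by simp [a]) (mem_ball_zero_iff.1 hz)
  rwa [norm_div, div_le_iff₀ (norm_pos_iff.2 (hne z hz))] at hmoeb

theorem sub_le_mul_norm_of_norm_sub_le_mul {a w : ℂ} {r : ℝ} (ha : ‖a‖ < 1) (hw : ‖w‖ < 1)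
    (hr0 : 0 ≤ r) (hr1 : r < 1) (h : ‖a - w‖ ≤ r * ‖1 - conj a * w‖) :
    ‖a‖ - r ≤ (1 - ‖a‖ * r) * ‖w‖ := by
  set α := ‖a‖
  set s := ‖w‖
  have hα0 : 0 ≤ α := norm_nonneg a
  have hs0 : 0 ≤ s := norm_nonneg w
  have hid := sq_norm_one_sub_conj_mul_sub_sq_norm_sub a w
  have hlow : 1 - α * s ≤ ‖1 - conj a * w‖ := by
    simpa [α, s, norm_mul] using norm_sub_norm_le (1 : ℂ) (conj a * w)
  have hsq : ‖a - w‖ ^ 2 ≤ r ^ 2 * ‖1 - conj a * w‖ ^ 2 := by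
    rw [← mul_pow]; exact pow_le_pow_left₀ (norm_nonneg _) h 2
  -- `(1 - α s)² (1 - r²) ≤ (1 - α²)(1 - s²)`, a quadratic inequality in `s` with roots
  -- `(α - r)/(1 - α r)` and `(α + r)/(1 + α r)`
  have hquad : ((1 - α * r) * s - (α - r)) * ((1 + α * r) * s - (α + r)) ≤ 0 := by
    have h1 : (1 - α * s) ^ 2 ≤ ‖1 - conj a * w‖ ^ 2 :=
      pow_le_pow_left₀ (by nlinarith) hlow 2
    nlinarith [mul_le_mul_of_nonneg_left h1 (by nlinarith : (0 : ℝ) ≤ 1 - r ^ 2)]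
  by_contra! hlt
  have hroot := nonneg_of_mul_nonpos_right hquad (by linarith)
  nlinarith [mul_le_mul_of_nonneg_left hroot (by nlinarith : (0 : ℝ) ≤ 1 - α * r),
    mul_nonneg hr0 (by nlinarith : (0 : ℝ) ≤ 1 - α ^ 2)]

theorem one_sub_norm_pow_mul_norm_le_of_norm_deriv_le {k : ℂ → ℂ} {n : ℕ}
    (hk : DifferentiableOn ℂ k (ball 0 1))
    (hk' : ∀ ζ ∈ ball (0 : ℂ) 1, ζ ≠ 0 → ‖deriv k ζ‖ ≤ n / (1 - ‖ζ‖) * ‖k ζ‖)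
    {z : ℂ} (hz : z ∈ ball (0 : ℂ) 1) :
    (1 - ‖z‖) ^ n * ‖k z‖ ≤ ‖k 0‖ := by
  have hz1 : ‖z‖ < 1 := mem_ball_zero_iff.1 hz
  have hnorm : ∀ t ∈ Icc (0 : ℝ) 1, ‖(t : ℂ) * z‖ = t * ‖z‖ := fun t ht => by
    rw [norm_mul, norm_real, Real.norm_of_nonneg ht.1]
  have hmem : ∀ t ∈ Icc (0 : ℝ) 1, (t : ℂ) * z ∈ ball (0 : ℂ) 1 := fun t ht => by
    rw [mem_ball_zero_iff, hnorm t ht]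
    nlinarith [ht.2, norm_nonneg z]
  have := pow_mul_norm_le_of_norm_deriv_le (c := fun t : ℝ => k (t * z))
    (c' := fun t => z * deriv k (t * z)) hz1 (n := n) (fun t ht => by
      have hkd := (hk.differentiableAt (isOpen_ball.mem_nhds (hmem t ht))).hasDerivAt
      have hm : HasDerivAt (fun s : ℝ => (s : ℂ) * z) z t := by
        simpa using ofRealCLM.hasDerivAt.mul_const z
      exact hkd.scomp t hm) ?_
  · simpa using this
  intro t ht
  have htI := Ioo_subset_Icc_self ht
  rcases eq_or_ne z 0 with rfl | hz0
  · simp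
  have h := hk' _ (hmem t htI) (mul_ne_zero (ofReal_ne_zero.2 ht.1.ne') hz0)
  rw [hnorm t htI] at h
  rw [norm_mul]
  calc ‖z‖ * ‖deriv k (t * z)‖ ≤ ‖z‖ * (n / (1 - t * ‖z‖) * ‖k (t * z)‖) := by gcongr
    _ = n * ‖z‖ / (1 - t * ‖z‖) * ‖k (t * z)‖ := by ring

section Starlike

variable {h : ℂ → ℂ}

theorem norm_invFunOn_mul_le_of_starConvex (hd : DifferentiableOn ℂ h (ball 0 1))
    (h0 : h 0 = 0) (hinj : InjOn h (ball 0 1)) (hne : ∀ z ∈ ball (0 : ℂ) 1, deriv h z ≠ 0)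
    (hstar : StarConvex ℝ 0 (h '' ball 0 1)) {t : ℝ} (ht : t ∈ Icc (0 : ℝ) 1) {z : ℂ}
    (hz : z ∈ ball (0 : ℂ) 1) :
    ‖Function.invFunOn h (ball 0 1) (t * h z)‖ ≤ ‖z‖ := by
  set inv := Function.invFunOn h (ball 0 1)
  have hsub : ∀ ζ ∈ ball (0 : ℂ) 1, ∃ y ∈ ball (0 : ℂ) 1, h y = t * h ζ := fun ζ hζ => by
    simpa [Complex.real_smul] using hstar.smul_mem (mem_image_of_mem h hζ) ht.1 ht.2
  refine norm_le_norm_of_mapsTo_ball (f := fun ζ => inv (t * h ζ)) (fun ζ hζ => ?_)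
    (fun ζ hζ => ?_) ?_ (mem_ball_zero_iff.1 hz)
  · obtain ⟨y, hy, hyζ⟩ := hsub ζ hζ
    have hinv := (hasStrictDerivAt_invFunOn isOpen_ball hd hinj hy
      (hne y hy)).hasDerivAt.differentiableAt
    rw [hyζ] at hinv
    exact (hinv.comp ζ ((hd.differentiableAt (isOpen_ball.mem_nhds hζ)).const_mul _)
      ).differentiableWithinAt
  · obtain ⟨y, hy, hyζ⟩ := hsub ζ hζ
    simpa [inv, ← hyζ, hinj.leftInvOn_invFunOn hy] using ball_subset_closedBall hy
  · simpa [h0] using hinj.leftInvOn_invFunOn (mem_ball_self one_pos)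

theorem re_mul_deriv_div_nonneg_of_starConvex (hd : DifferentiableOn ℂ h (ball 0 1))
    (h0 : h 0 = 0) (hinj : InjOn h (ball 0 1)) (hne : ∀ z ∈ ball (0 : ℂ) 1, deriv h z ≠ 0)
    (hstar : StarConvex ℝ 0 (h '' ball 0 1)) {z : ℂ} (hz : z ∈ ball (0 : ℂ) 1) :
    0 ≤ (z * deriv h z / h z).re := by
  set inv := Function.invFunOn h (ball 0 1)
  have hinvz : inv (h z) = z := hinj.leftInvOn_invFunOn hz
  have hderiv : HasDerivAt (fun t : ℝ => ‖inv (t * h z)‖ ^ 2)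
      (2 * inner ℝ z (h z * (deriv h z)⁻¹)) 1 := by
    have hline : HasDerivAt (fun t : ℝ => (t : ℂ) * h z) (h z) 1 := by
      simpa using ofRealCLM.hasDerivAt.mul_const (h z)
    have hinv := (hasStrictDerivAt_invFunOn isOpen_ball hd hinj hz (hne z hz)).hasDerivAt
    rw [← one_mul (h z), ← ofReal_one] at hinv
    have := (hinv.scomp 1 hline).norm_sq
    rwa [Function.comp_apply, ofReal_one, one_mul, hinj.leftInvOn_invFunOn hz,
      smul_eq_mul] at this
  have hmax : IsMaxOn (fun t : ℝ => ‖inv (t * h z)‖ ^ 2) (Icc 0 1) 1 := fun t ht => by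
    show _ ≤ ‖inv (((1 : ℝ) : ℂ) * h z)‖ ^ 2
    rw [ofReal_one, one_mul, hinvz]
    exact pow_le_pow_left₀ (norm_nonneg _)
      (norm_invFunOn_mul_le_of_starConvex hd h0 hinj hne hstar ht hz) 2
  have hre := hderiv.nonneg_of_isMaxOn_Icc zero_lt_one hmax
  rcases eq_or_ne z 0 with rfl | hz0
  · simp
  have hhz : h z ≠ 0 := fun hz' =>
    hz0 (hinj hz (mem_ball_self one_pos) (by rw [hz', h0]))
  rw [Complex.inner] at hre
  have hinv : z * deriv h z / h z = normSq z * (h z * (deriv h z)⁻¹ * conj z)⁻¹ := by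
    rw [normSq_eq_conj_mul_self]
    field_simp [hne z hz, hhz, hz0]
  rw [hinv, re_ofReal_mul, inv_re]
  exact mul_nonneg (normSq_nonneg z) (div_nonneg (by linarith) (normSq_nonneg _))

theorem dslope_ne_zero_of_injOn {U : Set ℂ} (hinj : InjOn h U) (hU : 0 ∈ U)
    (h1 : deriv h 0 ≠ 0) {w : ℂ} (hw : w ∈ U) : dslope h 0 w ≠ 0 := by
  rcases eq_or_ne w 0 with rfl | hw0
  · rwa [dslope_same]
  rw [dslope_of_ne _ hw0, slope_def_field, sub_zero]
  exact div_ne_zero (sub_ne_zero.2 fun hw' => hw0 (hinj hw hU hw')) hw0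

theorem re_deriv_div_dslope_nonneg_of_starConvex (hd : DifferentiableOn ℂ h (ball 0 1))
    (h0 : h 0 = 0) (hinj : InjOn h (ball 0 1)) (hne : ∀ z ∈ ball (0 : ℂ) 1, deriv h z ≠ 0)
    (hstar : StarConvex ℝ 0 (h '' ball 0 1)) {z : ℂ} (hz : z ∈ ball (0 : ℂ) 1) :
    0 ≤ (deriv h z / dslope h 0 z).re := by
  rcases eq_or_ne z 0 with rfl | hz0
  · simp [hne 0 hz]
  rw [dslope_of_ne _ hz0, slope_def_field, h0, sub_zero, sub_zero, div_div_eq_mul_div,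
    mul_comm]
  exact re_mul_deriv_div_nonneg_of_starConvex hd h0 hinj hne hstar hz

theorem norm_deriv_le_of_starConvex (hd : DifferentiableOn ℂ h (ball 0 1))
    (h0 : h 0 = 0) (h1 : deriv h 0 = 1) (hinj : InjOn h (ball 0 1))
    (hne : ∀ z ∈ ball (0 : ℂ) 1, deriv h z ≠ 0) (hstar : StarConvex ℝ 0 (h '' ball 0 1))
    {z : ℂ} (hz : z ∈ ball (0 : ℂ) 1) :
    ‖deriv h z‖ ≤ (1 + ‖z‖) / (1 - ‖z‖) ^ 3 := by
  have hz1 : ‖z‖ < 1 := mem_ball_zero_iff.1 hz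
  set k := dslope h 0
  have hk : DifferentiableOn ℂ k (ball 0 1) :=
    (differentiableOn_dslope (ball_mem_nhds _ one_pos)).2 hd
  have hk0 : k 0 = 1 := by simp [k, h1]
  have hkne : ∀ w ∈ ball (0 : ℂ) 1, k w ≠ 0 := fun w hw =>
    dslope_ne_zero_of_injOn hinj (mem_ball_self one_pos) (by simp [h1]) hw
  -- `p = z h'/h`, extended holomorphically to `0`
  set p := fun w => deriv h w / k w
  have hp : DifferentiableOn ℂ p (ball 0 1) := (hd.deriv isOpen_ball).div hk hkne
  have hp0 : p 0 = 1 := by simp [p, hk0, h1]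
  have hpre : ∀ w ∈ ball (0 : ℂ) 1, 0 ≤ (p w).re := fun w hw =>
    re_deriv_div_dslope_nonneg_of_starConvex hd h0 hinj hne hstar hw
  have hk' : ∀ ζ ∈ ball (0 : ℂ) 1, ζ ≠ 0 → ‖deriv k ζ‖ ≤ (2 : ℕ) / (1 - ‖ζ‖) * ‖k ζ‖ :=
    fun ζ hζ hζ0 => by
    have hlog : ζ * deriv k ζ = (p ζ - 1) * k ζ := by
      rw [mul_deriv_dslope_zero (hd.differentiableAt (isOpen_ball.mem_nhds hζ)) hζ0,
        sub_mul, one_mul, div_mul_cancel₀ _ (hkne ζ hζ)]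
    have hnorm := congrArg norm hlog
    rw [norm_mul, norm_mul] at hnorm
    have := norm_sub_one_le_of_re_nonneg hp hpre hp0 hζ
    rw [← mul_le_mul_iff_of_pos_left (norm_pos_iff.2 hζ0), hnorm]
    calc ‖p ζ - 1‖ * ‖k ζ‖ ≤ 2 * ‖ζ‖ / (1 - ‖ζ‖) * ‖k ζ‖ := by gcongr
      _ = ‖ζ‖ * ((2 : ℕ) / (1 - ‖ζ‖) * ‖k ζ‖) := by push_cast; ring
  have hgrowth := one_sub_norm_pow_mul_norm_le_of_norm_deriv_le hk hk' hz
  rw [hk0, norm_one] at hgrowth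
  have hpz := norm_le_of_re_nonneg hp hpre hp0 hz
  calc ‖deriv h z‖ = ‖p z‖ * ‖k z‖ := by
        rw [← norm_mul]; simp only [p]; rw [div_mul_cancel₀ _ (hkne z hz)]
    _ ≤ (1 + ‖z‖) / (1 - ‖z‖) * (1 / (1 - ‖z‖) ^ 2) := by
        gcongr
        rw [le_div_iff₀ (by positivity)]; linarith
    _ = (1 + ‖z‖) / (1 - ‖z‖) ^ 3 := by
        field_simp [(by linarith : 1 - ‖z‖ ≠ 0)]

end Starlike

theorem sq_sub_sq_mul_le_of_sub_le_mul {α r s A : ℝ} (hr0 : 0 ≤ r) (hr1 : r < 1)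
    (hrα : r ≤ α) (hα1 : α < 1) (hs0 : 0 ≤ s) (hs1 : s ≤ 1) (hA0 : 0 ≤ A)
    (hA : A ≤ (1 + r) / (1 - r) ^ 3) (hs : α - r ≤ (1 - α * r) * s) :
    A ^ 2 - (s * A) ^ 2 ≤ (1 - α ^ 2) * (1 + r) ^ 3 / ((1 - α * r) ^ 2 * (1 - r) ^ 5) := by
  have hαr : 0 < 1 - α * r := by nlinarith
  have hr : 0 < 1 - r := by linarith
  -- `(1 - α r)² - (α - r)² = (1 - α²)(1 - r²)`
  have hs' : (1 - s ^ 2) ≤ (1 - α ^ 2) * (1 - r ^ 2) / (1 - α * r) ^ 2 := by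
    rw [le_div_iff₀ (by positivity)]
    nlinarith [pow_le_pow_left₀ (sub_nonneg.2 hrα) hs 2]
  calc A ^ 2 - (s * A) ^ 2 = A ^ 2 * (1 - s ^ 2) := by ring
    _ ≤ ((1 + r) / (1 - r) ^ 3) ^ 2 * ((1 - α ^ 2) * (1 - r ^ 2) / (1 - α * r) ^ 2) := by
        gcongr
        nlinarith
    _ = (1 - α ^ 2) * (1 + r) ^ 3 / ((1 - α * r) ^ 2 * (1 - r) ^ 5) := by
        field_simp
        ring

theorem stmt11_general
    (h g : ℂ → ℂ) (α : ℝ)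
    (hd : DifferentiableOn ℂ h (Metric.ball (0:ℂ) 1))
    (gd : DifferentiableOn ℂ g (Metric.ball (0:ℂ) 1))
    (h0 : h 0 = 0) (h1 : deriv h 0 = 1)
    (hb1 : ‖deriv g 0‖ = α)
    (hsp : ∀ z ∈ Metric.ball (0:ℂ) 1, ‖deriv g z‖ < ‖deriv h z‖)
    (hinj : Set.InjOn h (Metric.ball (0:ℂ) 1))
    (hstar : ∀ w ∈ h '' (Metric.ball (0:ℂ) 1), segment ℝ 0 w ⊆ h '' (Metric.ball (0:ℂ) 1))
 :
    ∀ z ∈ Metric.ball (0:ℂ) 1,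
      (‖z‖ < α →
        ‖deriv h z‖ ^ 2 - ‖deriv g z‖ ^ 2
          ≤ (1 - α ^ 2) * (1 + ‖z‖) ^ 3 / ((1 - α * ‖z‖) ^ 2 * (1 - ‖z‖) ^ 5)) ∧
      (α ≤ ‖z‖ →
        ‖deriv h z‖ ^ 2 - ‖deriv g z‖ ^ 2
          ≤ (1 + ‖z‖) ^ 2 / (1 - ‖z‖) ^ 6) := by
  have hne : ∀ z ∈ ball (0 : ℂ) 1, deriv h z ≠ 0 := fun z hz =>
    norm_pos_iff.1 ((norm_nonneg _).trans_lt (hsp z hz))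
  intro z hz
  have hz1 : ‖z‖ < 1 := mem_ball_zero_iff.1 hz
  have hdist := norm_deriv_le_of_starConvex hd h0 h1 hinj hne
    (starConvex_iff_segment_subset.2 hstar) hz
  refine ⟨fun hzα => ?_, fun _ => ?_⟩
  · set ω := fun w => deriv g w / deriv h w
    have hmaps : MapsTo ω (ball 0 1) (ball 0 1) := fun w hw => by
      rw [mem_ball_zero_iff, norm_div, div_lt_one (norm_pos_iff.2 (hne w hw))]
      exact hsp w hw
    have hω0 : ‖ω 0‖ = α := by simp [ω, h1, hb1]
    have hα1 : ‖ω 0‖ < 1 := mem_ball_zero_iff.1 (hmaps (mem_ball_self one_pos))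
    have hlow := sub_le_mul_norm_of_norm_sub_le_mul hα1 (mem_ball_zero_iff.1 (hmaps hz))
      (norm_nonneg z) hz1 <| norm_sub_le_mul_norm_one_sub_conj_mul
        ((gd.deriv isOpen_ball).div (hd.deriv isOpen_ball) hne) hmaps hz
    rw [hω0] at hlow hα1
    have hg : ‖deriv g z‖ = ‖ω z‖ * ‖deriv h z‖ := by
      rw [norm_div, div_mul_cancel₀ _ (norm_ne_zero_iff.2 (hne z hz))]
    rw [hg]
    exact sq_sub_sq_mul_le_of_sub_le_mul (norm_nonneg z) hz1 hzα.le hα1 (norm_nonneg _)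
      (mem_ball_zero_iff.1 (hmaps hz)).le (norm_nonneg _) hdist hlow
  · calc ‖deriv h z‖ ^ 2 - ‖deriv g z‖ ^ 2 ≤ ‖deriv h z‖ ^ 2 := sub_le_self _ (sq_nonneg _)
      _ ≤ ((1 + ‖z‖) / (1 - ‖z‖) ^ 3) ^ 2 := pow_le_pow_left₀ (norm_nonneg _) hdist 2
      _ = (1 + ‖z‖) ^ 2 / (1 - ‖z‖) ^ 6 := by rw [div_pow, ← pow_mul]

theorem stmt11
    (h g : ℂ → ℂ) (α : ℝ) (hα : α ∈ Set.Ico (0:ℝ) 1)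
    (hd : DifferentiableOn ℂ h (Metric.ball (0:ℂ) 1))
    (gd : DifferentiableOn ℂ g (Metric.ball (0:ℂ) 1))
    (h0 : h 0 = 0) (h1 : deriv h 0 = 1) (g0 : g 0 = 0)
    (hb1 : ‖deriv g 0‖ = α)
    (hsp : ∀ z ∈ Metric.ball (0:ℂ) 1, ‖deriv g z‖ < ‖deriv h z‖)
    (hinj : Set.InjOn h (Metric.ball (0:ℂ) 1))
    (hstar : ∀ w ∈ h '' (Metric.ball (0:ℂ) 1), segment ℝ 0 w ⊆ h '' (Metric.ball (0:ℂ) 1))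
 :
    ∀ z ∈ Metric.ball (0:ℂ) 1,
      (‖z‖ < α →
        ‖deriv h z‖ ^ 2 - ‖deriv g z‖ ^ 2
          ≤ (1 - α ^ 2) * (1 + ‖z‖) ^ 3 / ((1 - α * ‖z‖) ^ 2 * (1 - ‖z‖) ^ 5)) ∧
      (α ≤ ‖z‖ →
        ‖deriv h z‖ ^ 2 - ‖deriv g z‖ ^ 2
          ≤ (1 + ‖z‖) ^ 2 / (1 - ‖z‖) ^ 6) :=
  stmt11_general h g α hd gd h0 h1 hb1 hsp hinj hstar
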